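/- Let M be a nonnegative real square matrix indexed by Fin s₁ ⊕ Fin s₂ with s₁, s₂ ≥ 1, partitioned into four blocks with square diagonal blocks. Let B be the 2×2 matrix whose (i,j) entry b_{ij} is the maximum row sum within block (i,j) of M. Then ρ(M) ≤ tr(B)/2 + √((tr(B)/2)² − det(B)). -/

import Mathlib

/-!
If `M x = z x` with `x ≠ 0`, let `α` and `β` be the largest moduli of the entries of `x` in the
two blocks. Evaluating `M x` at rows where these maxima are attained gives
`|z| α ≤ b₁₁ α + b₁₂ β` and `|z| β ≤ b₂₁ α + b₂₂ β`, so `|z|` is a subinvariant value of `B` with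
the nonzero nonnegative test vector `(α, β)`. For a `2 × 2` matrix with nonnegative off-diagonal
entries this forces `|z|` to lie below the larger root `tr B / 2 + √((tr B / 2)² − det B)` of the
characteristic polynomial.
-/

open Matrix

/-- Spectral radius of a real square matrix: the maximum of the moduli of its
complex eigenvalues (elements of the spectrum of the matrix over `ℂ`). -/
noncomputable def specRad {n : Type*} [Fintype n] [DecidableEq n]
    (M : Matrix n n ℝ) : ℝ :=
  sSup ((‖·‖) '' spectrum ℂ (M.map (algebraMap ℝ ℂ)))

theorem le_trace_div_two_add_sqrt_of_smul_le_mulVec {B : Matrix (Fin 2) (Fin 2) ℝ}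
    (hB01 : 0 ≤ B 0 1) (hB10 : 0 ≤ B 1 0) {v : Fin 2 → ℝ} (hv : 0 ≤ v) (hv0 : v ≠ 0) {r : ℝ}
    (hr : r • v ≤ B *ᵥ v) :
    r ≤ B.trace / 2 + √((B.trace / 2) ^ 2 - B.det) := by
  rw [trace_fin_two, det_fin_two]
  set a := B 0 0
  set b := B 0 1
  set c := B 1 0
  set d := B 1 1
  have h0 : r * v 0 ≤ a * v 0 + b * v 1 := by simpa using hr 0
  have h1 : r * v 1 ≤ c * v 0 + d * v 1 := by simpa using hr 1
  set D := ((a + d) / 2) ^ 2 - (a * d - b * c)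
  have hD : D = ((a - d) / 2) ^ 2 + b * c := by ring
  have hD0 : 0 ≤ D := hD ▸ by positivity
  have hsq : √D ^ 2 = D := Real.sq_sqrt hD0
  have hgap : |(a - d) / 2| ≤ √D := Real.abs_le_sqrt (by nlinarith [mul_nonneg hB01 hB10])
  obtain ⟨hgap_lo, hgap_hi⟩ := abs_le.mp hgap
  by_contra! hlt
  have ha : a < r := by linarith
  have hd : d < r := by linarith
  -- `r` lies beyond the larger root of the characteristic polynomial, where it is positive.
  have hchar : 0 < (r - a) * (r - d) - b * c := by nlinarith [Real.sqrt_nonneg D]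
  have hv0' : v 0 ≤ 0 := by
    nlinarith [mul_le_mul_of_nonneg_left (show (r - d) * v 1 ≤ c * v 0 by linarith) hB01,
      mul_le_mul_of_nonneg_left (show (r - a) * v 0 ≤ b * v 1 by linarith) (sub_pos.2 hd).le]
  have hv1' : v 1 ≤ 0 := by
    nlinarith [mul_le_mul_of_nonneg_left (show (r - a) * v 0 ≤ b * v 1 by linarith) hB10,
      mul_le_mul_of_nonneg_left (show (r - d) * v 1 ≤ c * v 0 by linarith) (sub_pos.2 ha).le]
  refine hv0 (funext fun i => ?_)
  fin_cases i
  · exact le_antisymm hv0' (hv 0)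
  · exact le_antisymm hv1' (hv 1)

theorem Matrix.exists_mulVec_eq_smul_of_mem_spectrum {K n : Type*} [Field K] [Fintype n]
    [DecidableEq n] {A : Matrix n n K} {μ : K} (hμ : μ ∈ spectrum K A) :
    ∃ x ≠ 0, A *ᵥ x = μ • x := by
  rw [← spectrum_toLin', ← Module.End.hasEigenvalue_iff_mem_spectrum] at hμ
  obtain ⟨x, hx⟩ := hμ.exists_hasEigenvector
  exact ⟨x, hx.2, by simpa using Module.End.mem_eigenspace_iff.mp hx.1⟩

theorem norm_map_mulVec_le {m n : Type*} [Fintype n] {M : Matrix m n ℝ}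
    (hM : ∀ i j, 0 ≤ M i j) (x : n → ℂ) (i : m) :
    ‖(M.map (algebraMap ℝ ℂ) *ᵥ x) i‖ ≤ ∑ j, M i j * ‖x j‖ := by
  refine (norm_sum_le _ _).trans_eq (Finset.sum_congr rfl fun j _ => ?_)
  simp [abs_of_nonneg (hM i j)]

section Blocks

variable {ι₁ ι₂ : Type*} [Fintype ι₁] [Fintype ι₂]

theorem norm_map_mulVec_le_of_blockwise_le {m : Type*} {M : Matrix m (ι₁ ⊕ ι₂) ℝ}
    (hM : ∀ i j, 0 ≤ M i j) {x : ι₁ ⊕ ι₂ → ℂ} {α β : ℝ} (hα : ∀ u, ‖x (.inl u)‖ ≤ α)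
    (hβ : ∀ u, ‖x (.inr u)‖ ≤ β) (i : m) :
    ‖(M.map (algebraMap ℝ ℂ) *ᵥ x) i‖ ≤
      (∑ u, M i (.inl u)) * α + (∑ u, M i (.inr u)) * β :=
  calc ‖(M.map (algebraMap ℝ ℂ) *ᵥ x) i‖ ≤ ∑ j, M i j * ‖x j‖ := norm_map_mulVec_le hM x i
    _ = ∑ u, M i (.inl u) * ‖x (.inl u)‖ + ∑ u, M i (.inr u) * ‖x (.inr u)‖ :=
      Fintype.sum_sum_type _
    _ ≤ ∑ u, M i (.inl u) * α + ∑ u, M i (.inr u) * β := by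
      gcongr with u _ u _
      exacts [hM _ _, hα u, hM _ _, hβ u]
    _ = (∑ u, M i (.inl u)) * α + (∑ u, M i (.inr u)) * β := by
      rw [Finset.sum_mul, Finset.sum_mul]

theorem exists_norm_smul_le_mulVec_of_mem_spectrum [Nonempty ι₁] [Nonempty ι₂] [DecidableEq ι₁]
    [DecidableEq ι₂] {M : Matrix (ι₁ ⊕ ι₂) (ι₁ ⊕ ι₂) ℝ} (hM : ∀ i j, 0 ≤ M i j)
    {B : Matrix (Fin 2) (Fin 2) ℝ}
    (hB00 : ∀ u, ∑ v, M (.inl u) (.inl v) ≤ B 0 0) (hB01 : ∀ u, ∑ v, M (.inl u) (.inr v) ≤ B 0 1)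
    (hB10 : ∀ u, ∑ v, M (.inr u) (.inl v) ≤ B 1 0) (hB11 : ∀ u, ∑ v, M (.inr u) (.inr v) ≤ B 1 1)
    {z : ℂ} (hz : z ∈ spectrum ℂ (M.map (algebraMap ℝ ℂ))) :
    ∃ w : Fin 2 → ℝ, 0 ≤ w ∧ w ≠ 0 ∧ ‖z‖ • w ≤ B *ᵥ w := by
  obtain ⟨x, hx0, hzx⟩ := exists_mulVec_eq_smul_of_mem_spectrum hz
  obtain ⟨u, hα⟩ := Finite.exists_max fun u => ‖x (.inl u)‖
  obtain ⟨u', hβ⟩ := Finite.exists_max fun u => ‖x (.inr u)‖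
  have hrow := norm_map_mulVec_le_of_blockwise_le hM hα hβ
  simp only [hzx, Pi.smul_apply, smul_eq_mul, norm_mul] at hrow
  have hrow₁ : ‖z‖ * ‖x (.inl u)‖ ≤ B 0 0 * ‖x (.inl u)‖ + B 0 1 * ‖x (.inr u')‖ :=
    (hrow (.inl u)).trans (by gcongr; exacts [hB00 u, hB01 u])
  have hrow₂ : ‖z‖ * ‖x (.inr u')‖ ≤ B 1 0 * ‖x (.inl u)‖ + B 1 1 * ‖x (.inr u')‖ :=
    (hrow (.inr u')).trans (by gcongr; exacts [hB10 u', hB11 u'])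
  refine ⟨![‖x (.inl u)‖, ‖x (.inr u')‖], ?_, ?_, ?_⟩
  · intro i
    fin_cases i <;> simp
  · intro hw
    have hα' : ‖x (.inl u)‖ = 0 := congrFun hw 0
    have hβ' : ‖x (.inr u')‖ = 0 := congrFun hw 1
    refine hx0 (funext fun i => norm_le_zero_iff.mp ?_)
    cases i with
    | inl v => exact hα' ▸ hα v
    | inr v => exact hβ' ▸ hβ v
  · intro i
    fin_cases i <;> simpa

end Blocks

/-- Upper bound on the spectral radius from a `2 × 2` upward row sum
contraction: if `B` is the `2 × 2` matrix of maximum block row sums of the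
nonnegative matrix `M` (square diagonal blocks), then
`ρ(M) ≤ tr(B)/2 + √((tr(B)/2)² − det B)`. -/
theorem specRad_le_twoByTwo_upwardContraction
    {s₁ s₂ : ℕ} (hs₁ : 1 ≤ s₁) (hs₂ : 1 ≤ s₂)
    (M : Matrix (Fin s₁ ⊕ Fin s₂) (Fin s₁ ⊕ Fin s₂) ℝ)
    (hM : ∀ p q, 0 ≤ M p q)
    (B : Matrix (Fin 2) (Fin 2) ℝ)
    (hB00 : B 0 0 = Finset.univ.sup'
      (Finset.univ_nonempty_iff.mpr (Fin.pos_iff_nonempty.mp hs₁))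
      (fun u : Fin s₁ => ∑ v : Fin s₁, M (Sum.inl u) (Sum.inl v)))
    (hB01 : B 0 1 = Finset.univ.sup'
      (Finset.univ_nonempty_iff.mpr (Fin.pos_iff_nonempty.mp hs₁))
      (fun u : Fin s₁ => ∑ v : Fin s₂, M (Sum.inl u) (Sum.inr v)))
    (hB10 : B 1 0 = Finset.univ.sup'
      (Finset.univ_nonempty_iff.mpr (Fin.pos_iff_nonempty.mp hs₂))
      (fun u : Fin s₂ => ∑ v : Fin s₁, M (Sum.inr u) (Sum.inl v)))
    (hB11 : B 1 1 = Finset.univ.sup'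
      (Finset.univ_nonempty_iff.mpr (Fin.pos_iff_nonempty.mp hs₂))
      (fun u : Fin s₂ => ∑ v : Fin s₂, M (Sum.inr u) (Sum.inr v))) :
    specRad M ≤ B.trace / 2 + Real.sqrt ((B.trace / 2) ^ 2 - B.det) := by
  have : Nonempty (Fin s₁) := Fin.pos_iff_nonempty.mp hs₁
  have : Nonempty (Fin s₂) := Fin.pos_iff_nonempty.mp hs₂
  have h00 : ∀ u, _ ≤ B 0 0 := fun u => hB00 ▸ Finset.le_sup' _ (Finset.mem_univ u)
  have h01 : ∀ u, _ ≤ B 0 1 := fun u => hB01 ▸ Finset.le_sup' _ (Finset.mem_univ u)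
  have h10 : ∀ u, _ ≤ B 1 0 := fun u => hB10 ▸ Finset.le_sup' _ (Finset.mem_univ u)
  have h11 : ∀ u, _ ≤ B 1 1 := fun u => hB11 ▸ Finset.le_sup' _ (Finset.mem_univ u)
  have hrowSum_nonneg {ι : Type} [Fintype ι] (p : Fin s₁ ⊕ Fin s₂) (f : ι → Fin s₁ ⊕ Fin s₂) :
      0 ≤ ∑ v, M p (f v) := Finset.sum_nonneg fun v _ => hM _ _
  have hB00_nonneg := (hrowSum_nonneg _ _).trans (h00 (Classical.arbitrary _))
  have hB01_nonneg := (hrowSum_nonneg _ _).trans (h01 (Classical.arbitrary _))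
  have hB10_nonneg := (hrowSum_nonneg _ _).trans (h10 (Classical.arbitrary _))
  have hB11_nonneg := (hrowSum_nonneg _ _).trans (h11 (Classical.arbitrary _))
  have htrace : 0 ≤ B.trace := trace_fin_two B ▸ add_nonneg hB00_nonneg hB11_nonneg
  refine Real.sSup_le ?_ (by positivity)
  rintro _ ⟨z, hz, rfl⟩
  obtain ⟨w, hw, hw0, hzw⟩ := exists_norm_smul_le_mulVec_of_mem_spectrum hM h00 h01 h10 h11 hz
  exact le_trace_div_two_add_sqrt_of_smul_le_mulVec hB01_nonneg hB10_nonneg hw hw0 hzw
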